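/- arXiv:2310.17171 — 5 statements merged into one kernel-verified Lean document; each statement's English description precedes it below -/
import Mathlib

section
/- Let (L_t)_{t ∈ ℕ} be a sequence of convex functions L_t : ℝ → ℝ and let x* ∈ ℝ. Suppose that for every x ≠ x* there exists T such that L_t(x) > L_t(x*) for all t ≥ T. Then every sequence (x_t) such that x_t is a global minimizer of L_t for each t satisfies x_t → x* as t → ∞. -/
open Filter

/-- Let `(L_t)` be a sequence of convex functions `L_t : ℝ → ℝ` and let
`x* ∈ ℝ`. Suppose that for every `x ≠ x*` there exists `T` such that `L_t(x) > L_t(x*)`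
for all `t ≥ T`. Then every sequence `(x_t)` such that `x_t` is a global minimizer of
`L_t` for each `t` satisfies `x_t → x*` as `t → ∞`. -/
theorem minimizers_tendsto_of_eventually_strict
    (L : ℕ → ℝ → ℝ) (hconv : ∀ t, ConvexOn ℝ Set.univ (L t)) (xstar : ℝ)
    (hsep : ∀ x : ℝ, x ≠ xstar → ∃ T : ℕ, ∀ t ≥ T, L t xstar < L t x)
    (x : ℕ → ℝ) (hmin : ∀ t, ∀ y : ℝ, L t (x t) ≤ L t y) :
    Tendsto x atTop (nhds xstar) := by
  rw [Metric.tendsto_atTop]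
  intro ε hε
  obtain ⟨T1, hT1⟩ := hsep (xstar + ε) (by intro h; nlinarith [hε])
  obtain ⟨T2, hT2⟩ := hsep (xstar - ε) (by intro h; nlinarith [hε])
  refine ⟨max T1 T2, fun t ht => ?_⟩
  have h1 := hT1 t (le_trans (le_max_left _ _) ht)
  have h2 := hT2 t (le_trans (le_max_right _ _) ht)
  rw [Real.dist_eq, abs_lt]
  constructor
  · by_contra hcon
    push_neg at hcon
    -- x t ≤ xstar - ε
    have hseg : xstar - ε ∈ segment ℝ (x t) xstar := by
      rw [segment_eq_Icc (by linarith : x t ≤ xstar)]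
      constructor <;> linarith
    obtain ⟨a, b, ha, hb, hab, hz⟩ := hseg
    have := (hconv t).le_on_segment' (Set.mem_univ (x t)) (Set.mem_univ xstar) ha hb hab
    rw [hz] at this
    have hle : L t (xstar - ε) ≤ max (L t (x t)) (L t xstar) := this
    have := hmin t xstar
    have : max (L t (x t)) (L t xstar) = L t xstar := max_eq_right this
    linarith [hle, this ▸ hle]
  · by_contra hcon
    push_neg at hcon
    have hseg : xstar + ε ∈ segment ℝ xstar (x t) := by
      rw [segment_eq_Icc (by linarith : xstar ≤ x t)]
      constructor <;> linarith
    obtain ⟨a, b, ha, hb, hab, hz⟩ := hseg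
    have := (hconv t).le_on_segment' (Set.mem_univ xstar) (Set.mem_univ (x t)) ha hb hab
    rw [hz] at this
    have hle : L t (xstar + ε) ≤ max (L t xstar) (L t (x t)) := this
    have hm : max (L t xstar) (L t (x t)) = L t xstar := max_eq_left (hmin t xstar)
    linarith [hm ▸ hle]
end

section
/- For every μ ∈ (0, 1) and all γ₁, γ₂ > 0, the squared Hellinger distance between the Bernoulli distributions with parameters f(μ, γ₁) and f(μ, γ₂) satisfies H²(f(μ, γ₁), f(μ, γ₂)) ≥ (√γ₁ − √γ₂)² · μ(1 − μ) / (2 · max{(γ₁ + γ₂)/2, 1}²). -/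
/-- The declaration probability function `f(μ, γ) = γμ/(1 + (γ − 1)μ)`. -/
noncomputable def declProb (μ γ : ℝ) : ℝ := γ * μ / (1 + (γ - 1) * μ)

/-- Squared Hellinger distance between `Bernoulli(p)` and `Bernoulli(q)`:
`H²(p, q) = 1 − √(pq) − √((1 − p)(1 − q))`. -/
noncomputable def hellingerSqBernoulli (p q : ℝ) : ℝ :=
  1 - Real.sqrt (p * q) - Real.sqrt ((1 - p) * (1 - q))

/-!
Write `d(γ) = 1 + (γ − 1)μ`, so that `f(μ, γ) = γμ / d(γ)` and `1 − f(μ, γ) = (1 − μ) / d(γ)`.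
The Bhattacharyya coefficient `B = √(f₁f₂) + √((1 − f₁)(1 − f₂))` is then
`(√(γ₁γ₂) μ + 1 − μ) / √(d₁d₂)`, and `1 − B² = (√γ₁ − √γ₂)² μ(1 − μ) / (d₁d₂)`.
Since `H² = 1 − B ≥ (1 − B²)/2`, it remains to bound `d₁d₂ ≤ d((γ₁ + γ₂)/2)²` (AM–GM, `d` being
affine in `γ`) and `d(γ) ≤ max γ 1` (`d(γ)` is a convex combination of `1` and `γ`).
-/

open Real Set

noncomputable def declDenom (μ γ : ℝ) : ℝ := 1 + (γ - 1) * μ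

theorem declDenom_pos {μ γ : ℝ} (hμ : μ ∈ Icc 0 1) (hγ : 0 < γ) : 0 < declDenom μ γ := by
  unfold declDenom
  rcases hμ.2.lt_or_eq with hμ1 | rfl
  · nlinarith [mul_nonneg hγ.le hμ.1]
  · linarith

theorem declDenom_le_max {μ : ℝ} (γ : ℝ) (hμ : μ ∈ Icc 0 1) : declDenom μ γ ≤ max γ 1 := by
  unfold declDenom
  nlinarith [hμ.1, hμ.2, le_max_left γ 1, le_max_right γ 1]

theorem declDenom_mul_le_sq_avg (μ γ₁ γ₂ : ℝ) :
    declDenom μ γ₁ * declDenom μ γ₂ ≤ declDenom μ ((γ₁ + γ₂) / 2) ^ 2 := by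
  unfold declDenom
  nlinarith [sq_nonneg ((γ₁ - γ₂) * μ)]

theorem declProb_eq_div (μ γ : ℝ) : declProb μ γ = γ * μ / declDenom μ γ := rfl

theorem one_sub_declProb {μ γ : ℝ} (hd : declDenom μ γ ≠ 0) :
    1 - declProb μ γ = (1 - μ) / declDenom μ γ := by
  rw [declProb_eq_div, one_sub_div hd, declDenom]
  ring

noncomputable def bhattacharyyaBernoulli (p q : ℝ) : ℝ := √(p * q) + √((1 - p) * (1 - q))

theorem one_sub_bhattacharyyaBernoulli_sq_div_two_le_hellingerSqBernoulli (p q : ℝ) :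
    (1 - bhattacharyyaBernoulli p q ^ 2) / 2 ≤ hellingerSqBernoulli p q := by
  have : hellingerSqBernoulli p q = 1 - bhattacharyyaBernoulli p q := by
    rw [hellingerSqBernoulli, bhattacharyyaBernoulli]
    ring
  rw [this]
  nlinarith [sq_nonneg (1 - bhattacharyyaBernoulli p q)]

theorem bhattacharyyaBernoulli_declProb {μ γ₁ γ₂ : ℝ} (hμ : μ ∈ Icc 0 1) (hγ₁ : 0 < γ₁) (hγ₂ : 0 < γ₂) :
    bhattacharyyaBernoulli (declProb μ γ₁) (declProb μ γ₂) =
      (√γ₁ * √γ₂ * μ + (1 - μ)) / √(declDenom μ γ₁ * declDenom μ γ₂) := by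
  have hd₁ := declDenom_pos hμ hγ₁
  have hd₂ := declDenom_pos hμ hγ₂
  have hd := (mul_pos hd₁ hd₂).le
  rw [bhattacharyyaBernoulli, one_sub_declProb hd₁.ne', one_sub_declProb hd₂.ne', declProb_eq_div, declProb_eq_div,
    div_mul_div_comm, div_mul_div_comm, sqrt_div' _ hd, sqrt_div' _ hd, ← add_div,
    show γ₁ * μ * (γ₂ * μ) = γ₁ * γ₂ * (μ * μ) by ring, sqrt_mul (mul_nonneg hγ₁.le hγ₂.le),
    sqrt_mul hγ₁.le, sqrt_mul_self hμ.1, sqrt_mul_self (sub_nonneg.2 hμ.2)]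

theorem one_sub_bhattacharyyaBernoulli_declProb_sq {μ γ₁ γ₂ : ℝ} (hμ : μ ∈ Icc 0 1) (hγ₁ : 0 < γ₁)
    (hγ₂ : 0 < γ₂) :
    1 - bhattacharyyaBernoulli (declProb μ γ₁) (declProb μ γ₂) ^ 2 =
      (√γ₁ - √γ₂) ^ 2 * (μ * (1 - μ)) / (declDenom μ γ₁ * declDenom μ γ₂) := by
  have hd := mul_pos (declDenom_pos hμ hγ₁) (declDenom_pos hμ hγ₂)
  rw [bhattacharyyaBernoulli_declProb hμ hγ₁ hγ₂, div_pow, sq_sqrt hd.le, one_sub_div hd.ne']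
  congr 1
  unfold declDenom
  linear_combination (-(μ - μ ^ 2 + γ₂ * μ ^ 2)) * sq_sqrt hγ₁.le +
    (-(μ - μ ^ 2 + √γ₁ ^ 2 * μ ^ 2)) * sq_sqrt hγ₂.le

/-- For every `μ ∈ (0, 1)` and all `γ₁, γ₂ > 0`, the squared Hellinger
distance between the Bernoulli distributions with parameters `f(μ, γ₁)` and `f(μ, γ₂)`
satisfies `H²(f(μ, γ₁), f(μ, γ₂)) ≥ (√γ₁ − √γ₂)² · μ(1 − μ) / (2 · max{(γ₁+γ₂)/2, 1}²)`. -/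
theorem hellingerSq_declProb_lower_bound
    (μ γ₁ γ₂ : ℝ) (hμ : μ ∈ Set.Ioo (0 : ℝ) 1) (hγ₁ : 0 < γ₁) (hγ₂ : 0 < γ₂) :
    (Real.sqrt γ₁ - Real.sqrt γ₂) ^ 2 * (μ * (1 - μ)) /
        (2 * max ((γ₁ + γ₂) / 2) 1 ^ 2)
      ≤ hellingerSqBernoulli (declProb μ γ₁) (declProb μ γ₂) := by
  have hμ' : μ ∈ Icc 0 1 := Ioo_subset_Icc_self hμ
  have hd := mul_pos (declDenom_pos hμ' hγ₁) (declDenom_pos hμ' hγ₂)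
  have hdM : declDenom μ γ₁ * declDenom μ γ₂ ≤ max ((γ₁ + γ₂) / 2) 1 ^ 2 :=
    (declDenom_mul_le_sq_avg μ γ₁ γ₂).trans <| pow_le_pow_left₀
      (declDenom_pos hμ' (by positivity)).le (declDenom_le_max _ hμ') 2
  calc (√γ₁ - √γ₂) ^ 2 * (μ * (1 - μ)) / (2 * max ((γ₁ + γ₂) / 2) 1 ^ 2)
      ≤ (√γ₁ - √γ₂) ^ 2 * (μ * (1 - μ)) / (declDenom μ γ₁ * declDenom μ γ₂) / 2 := by
        rw [div_div, mul_comm _ (2 : ℝ)]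
        gcongr
        exact mul_nonneg (sq_nonneg _) (mul_nonneg hμ.1.le (sub_nonneg.2 hμ.2.le))
    _ = (1 - bhattacharyyaBernoulli (declProb μ γ₁) (declProb μ γ₂) ^ 2) / 2 := by
        rw [one_sub_bhattacharyyaBernoulli_declProb_sq hμ' hγ₁ hγ₂]
    _ ≤ hellingerSqBernoulli (declProb μ γ₁) (declProb μ γ₂) :=
        one_sub_bhattacharyyaBernoulli_sq_div_two_le_hellingerSqBernoulli _ _
end

section
/- Let (Ω, F, P) be a probability space with a filtration (F_t)_{t ≥ 1}, and let (Y_t)_{t ≥ 1} be a real-valued martingale with respect to (F_t) with Y_1 = 0 and bounded increments |Y_t − Y_{t−1}| ≤ α almost surely for all t ≥ 2 (α > 0). Let (X_t)_{t ≥ 2} be a predictable process (X_t is F_{t−1}-measurable) with almost surely nonnegative increments and X_t → ∞ as t → ∞, and let W_t = Σ_{τ=2}^t E[(Y_τ − Y_{τ−1})² | F_{τ−1}] be the predictable quadratic variation of Y. If there is a constant c₁ > 0 such that almost surely W_t ≤ c₁ X_t for all t, then almost surely Y_t ≥ X_t for only finitely many t. -/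
/-!
For a dyadic level `k`, stop `Y` at the first time it reaches `2 ^ k` or the predictable clock `X`
is about to exceed `2 ^ (k + 1)`. Since `Y ^ 2` minus its predictable quadratic variation is a
martingale, optional stopping and Chebyshev's inequality bound the probability that `Y` reaches
`2 ^ k` while `X ≤ 2 ^ (k + 1)` by `c₁ * 2 ^ (k + 1) / 4 ^ k`. These bounds are summable, so by
Borel–Cantelli almost surely only finitely many levels are reached; but `X t ≤ Y t` for infinitely
many `t`, with `X t → ∞`, would reach infinitely many of them.
-/

open MeasureTheory Filter

namespace MeasureTheory

variable {Ω : Type*} {m0 : MeasurableSpace Ω} {P : Measure Ω} {ℱ : Filtration ℕ m0}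
  {Y : ℕ → Ω → ℝ}

noncomputable def predictableQuadVar (Y : ℕ → Ω → ℝ) (ℱ : Filtration ℕ m0) (P : Measure Ω)
    (n : ℕ) : Ω → ℝ :=
  ∑ i ∈ Finset.range n, P[(Y (i + 1) - Y i) ^ 2 | ℱ i]

@[simp]
theorem predictableQuadVar_zero : predictableQuadVar Y ℱ P 0 = 0 := by
  simp [predictableQuadVar]

theorem integrable_predictableQuadVar (n : ℕ) : Integrable (predictableQuadVar Y ℱ P n) P :=
  integrable_finsetSum' _ fun _ _ => integrable_condExp

theorem Martingale.condExp_sq_sub_sq_ae_eq (hY : Martingale Y ℱ P)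
    (hL2 : ∀ n, MemLp (Y n) 2 P) {i j : ℕ} (hij : i ≤ j) :
    P[Y j ^ 2 - Y i ^ 2 | ℱ i] =ᵐ[P] P[(Y j - Y i) ^ 2 | ℱ i] := by
  have hd : MemLp (Y j - Y i) 2 P := (hL2 j).sub (hL2 i)
  have hsq : Integrable ((Y j - Y i) ^ 2) P := hd.integrable_sq
  have hcross : Integrable (Y i * (Y j - Y i)) P := (hL2 i).integrable_mul hd
  have hcentered : P[Y j - Y i | ℱ i] =ᵐ[P] 0 := by
    filter_upwards [condExp_sub (hY.integrable j) (hY.integrable i) (ℱ i),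
      hY.condExp_ae_eq hij, hY.condExp_ae_eq (le_refl i)] with ω h hj hi
    simp [h, hj, hi]
  have hsplit : Y j ^ 2 - Y i ^ 2 = (Y j - Y i) ^ 2 + (2 : ℝ) • (Y i * (Y j - Y i)) := by
    ext ω; simp only [Pi.sub_apply, Pi.pow_apply, Pi.add_apply, Pi.smul_apply, Pi.mul_apply,
      smul_eq_mul]; ring
  rw [hsplit]
  filter_upwards [condExp_add hsq (hcross.smul (2 : ℝ)) (ℱ i),
    condExp_mul_of_stronglyMeasurable_left (hY.stronglyAdapted i) hcross
      ((hY.integrable j).sub (hY.integrable i)),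
    condExp_smul (2 : ℝ) (Y i * (Y j - Y i)) (ℱ i),
    hcentered] with ω h hpull hsmul h0
  simp [h, hsmul, hpull, h0]

theorem stronglyAdapted_predictableQuadVar :
    StronglyAdapted ℱ (predictableQuadVar Y ℱ P) := fun _ =>
  Finset.stronglyMeasurable_sum _ fun _ hi =>
    stronglyMeasurable_condExp.mono (ℱ.mono (Finset.mem_range.1 hi).le)

theorem Martingale.predictablePart_sq_ae_eq (hY : Martingale Y ℱ P)
    (hL2 : ∀ n, MemLp (Y n) 2 P) (n : ℕ) :
    predictablePart (fun n => Y n ^ 2) ℱ P n =ᵐ[P] predictableQuadVar Y ℱ P n :=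
  eventuallyEq_sum fun i _ => hY.condExp_sq_sub_sq_ae_eq hL2 (Nat.le_succ i)

theorem Martingale.sq_sub_predictableQuadVar [IsFiniteMeasure P] (hY : Martingale Y ℱ P)
    (hL2 : ∀ n, MemLp (Y n) 2 P) :
    Martingale (fun n => Y n ^ 2 - predictableQuadVar Y ℱ P n) ℱ P := by
  have hsq : StronglyAdapted ℱ fun n => Y n ^ 2 := fun n => (hY.stronglyAdapted n).pow 2
  refine (martingale_martingalePart hsq fun n => (hL2 n).integrable_sq).congr
    (hsq.sub stronglyAdapted_predictableQuadVar) fun n => ?_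
  exact EventuallyEq.rfl.sub (hY.predictablePart_sq_ae_eq hL2 n)

theorem Martingale.integral_stoppedValue_eq_integral_zero [IsFiniteMeasure P] {M : ℕ → Ω → ℝ}
    (hM : Martingale M ℱ P) {π : Ω → WithTop ℕ} (hπ : IsStoppingTime ℱ π) {N : ℕ}
    (hπN : ∀ ω, π ω ≤ N) :
    ∫ ω, stoppedValue M π ω ∂P = ∫ ω, M 0 ω ∂P := by
  calc ∫ ω, stoppedValue M π ω ∂P = ∫ ω, P[M N | hπ.measurableSpace] ω ∂P :=
        integral_congr_ae (hM.stoppedValue_ae_eq_condExp_of_le_const hπ hπN)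
    _ = ∫ ω, P[M N | ℱ 0] ω ∂P := by
        rw [integral_condExp hπ.measurableSpace_le, integral_condExp (ℱ.le 0)]
    _ = ∫ ω, M 0 ω ∂P := integral_congr_ae (hM.condExp_ae_eq N.zero_le)

theorem Martingale.integral_stoppedValue_sq [IsFiniteMeasure P] (hY : Martingale Y ℱ P)
    (hL2 : ∀ n, MemLp (Y n) 2 P) {π : Ω → WithTop ℕ} (hπ : IsStoppingTime ℱ π) {N : ℕ}
    (hπN : ∀ ω, π ω ≤ N) :
    ∫ ω, stoppedValue Y π ω ^ 2 ∂P
      = ∫ ω, Y 0 ω ^ 2 ∂P + ∫ ω, stoppedValue (predictableQuadVar Y ℱ P) π ω ∂P := by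
  have h := (hY.sq_sub_predictableQuadVar hL2).integral_stoppedValue_eq_integral_zero hπ hπN
  have hsq : Integrable (fun ω => stoppedValue Y π ω ^ 2) P :=
    integrable_stoppedValue ℕ hπ (fun n => (hL2 n).integrable_sq) hπN
  have hQ : Integrable (stoppedValue (predictableQuadVar Y ℱ P) π) P :=
    integrable_stoppedValue ℕ hπ integrable_predictableQuadVar hπN
  have hdiff : ∀ ω, stoppedValue (fun n => Y n ^ 2 - predictableQuadVar Y ℱ P n) π ω
      = stoppedValue Y π ω ^ 2 - stoppedValue (predictableQuadVar Y ℱ P) π ω := fun _ => rfl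
  simp only [hdiff, integral_sub hsq hQ, predictableQuadVar_zero, sub_zero, Pi.pow_apply] at h
  linarith

theorem Martingale.measure_le_stoppedValue_le [IsProbabilityMeasure P] (hY : Martingale Y ℱ P)
    (hL2 : ∀ n, MemLp (Y n) 2 P) (hY0 : Y 0 =ᵐ[P] 0) {π : Ω → WithTop ℕ}
    (hπ : IsStoppingTime ℱ π) {N : ℕ} (hπN : ∀ ω, π ω ≤ N) {C : ℝ}
    (hC : ∀ᵐ ω ∂P, stoppedValue (predictableQuadVar Y ℱ P) π ω ≤ C) {a : ℝ} (ha : 0 < a) :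
    P {ω | a ≤ stoppedValue Y π ω} ≤ ENNReal.ofReal (C / a ^ 2) := by
  have hsq : Integrable (fun ω => stoppedValue Y π ω ^ 2) P :=
    integrable_stoppedValue ℕ hπ (fun n => (hL2 n).integrable_sq) hπN
  have hmarkov := mul_meas_ge_le_integral_of_nonneg (Eventually.of_forall fun ω => sq_nonneg _)
    hsq (a ^ 2)
  have hsecond : ∫ ω, stoppedValue Y π ω ^ 2 ∂P ≤ C := by
    rw [hY.integral_stoppedValue_sq hL2 hπ hπN,
      integral_eq_zero_of_ae (by filter_upwards [hY0] with ω h; simp [h]), zero_add]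
    calc ∫ ω, stoppedValue (predictableQuadVar Y ℱ P) π ω ∂P ≤ ∫ _, C ∂P :=
          integral_mono_ae (integrable_stoppedValue ℕ hπ integrable_predictableQuadVar hπN)
            (integrable_const C) hC
      _ = C := by simp
  have hsub : {ω | a ≤ stoppedValue Y π ω} ⊆ {ω | a ^ 2 ≤ stoppedValue Y π ω ^ 2} :=
    fun ω h => pow_le_pow_left₀ ha.le h 2
  calc P {ω | a ≤ stoppedValue Y π ω} ≤ P {ω | a ^ 2 ≤ stoppedValue Y π ω ^ 2} :=
        measure_mono hsub
    _ = ENNReal.ofReal (P.real {ω | a ^ 2 ≤ stoppedValue Y π ω ^ 2}) :=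
        (ofReal_measureReal (measure_ne_top _ _)).symm
    _ ≤ ENNReal.ofReal (C / a ^ 2) := by
        gcongr
        rw [le_div_iff₀ (by positivity)]
        linarith

theorem Martingale.measure_exists_le_le_of_horizon [IsProbabilityMeasure P]
    (hY : Martingale Y ℱ P) (hL2 : ∀ n, MemLp (Y n) 2 P) (hY0 : Y 0 =ᵐ[P] 0)
    {X : ℕ → Ω → ℝ} (hX : ∀ n, Measurable[ℱ n] (X (n + 1)))
    (hXmono : ∀ᵐ ω ∂P, Monotone fun n => X n ω) {c : ℝ} (hc : 0 ≤ c)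
    (hQX : ∀ᵐ ω ∂P, ∀ n, predictableQuadVar Y ℱ P n ω ≤ c * X n ω)
    {a b : ℝ} (ha : 0 < a) (hb : 0 ≤ b) (N : ℕ) :
    P {ω | ∃ n ≤ N, X n ω ≤ b ∧ a ≤ Y n ω} ≤ ENNReal.ofReal (c * b / a ^ 2) := by
  -- `X (n + 1)` is `ℱ n`-measurable, so stopping before the clock exceeds `b` is a stopping time.
  set u : ℕ → Ω → ℝ × ℝ := fun n ω => (Y n ω, X (n + 1) ω)
  set s : Set (ℝ × ℝ) := {p | a ≤ p.1 ∨ b < p.2}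
  set π : Ω → ℕ := hittingBtwn u s 0 N
  have hπ : IsStoppingTime ℱ (fun ω => (π ω : WithTop ℕ)) :=
    Adapted.isStoppingTime_hittingBtwn
      (fun n => ((hY.stronglyAdapted n).measurable).prodMk (hX n))
      ((measurableSet_le measurable_const measurable_fst).union
        (measurableSet_lt measurable_const measurable_snd))
  have hπN : ∀ ω, (π ω : WithTop ℕ) ≤ N := fun ω =>
    WithTop.coe_le_coe.2 (hittingBtwn_le (u := u) (s := s) (n := 0) ω)
  have hreach : ∀ᵐ ω ∂P, (∃ n ≤ N, X n ω ≤ b ∧ a ≤ Y n ω) → a ≤ Y (π ω) ω := by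
    filter_upwards [hXmono] with ω hmono
    rintro ⟨n, hnN, hXn, hYn⟩
    have hhit : u n ω ∈ s := Or.inl hYn
    have hπn : π ω ≤ n := hittingBtwn_le_of_mem n.zero_le hnN hhit
    rcases hittingBtwn_mem_set ⟨n, ⟨n.zero_le, hnN⟩, hhit⟩ with h | h
    · exact h
    · obtain rfl : π ω = n := by
        by_contra hne
        exact (h.trans_le (hmono (by omega : π ω + 1 ≤ n))).not_ge hXn
      exact hYn
  have hclock : ∀ᵐ ω ∂P, predictableQuadVar Y ℱ P (π ω) ω ≤ c * b := by
    filter_upwards [hQX] with ω hω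
    rcases hk : π ω with _ | k
    · simpa using mul_nonneg hc hb
    · have hnot := notMem_of_lt_hittingBtwn (show k < π ω by omega) k.zero_le
      simp only [u, s, Set.mem_ofPred_eq, not_or, not_lt] at hnot
      exact (hω (k + 1)).trans (mul_le_mul_of_nonneg_left hnot.2 hc)
  calc P {ω | ∃ n ≤ N, X n ω ≤ b ∧ a ≤ Y n ω}
      ≤ P {ω | a ≤ stoppedValue Y (fun ω => (π ω : WithTop ℕ)) ω} :=
        measure_mono_ae (by filter_upwards [hreach] with ω h using h)
    _ ≤ ENNReal.ofReal (c * b / a ^ 2) :=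
        hY.measure_le_stoppedValue_le hL2 hY0 hπ hπN hclock ha

theorem Martingale.measure_exists_le_le [IsProbabilityMeasure P]
    (hY : Martingale Y ℱ P) (hL2 : ∀ n, MemLp (Y n) 2 P) (hY0 : Y 0 =ᵐ[P] 0)
    {X : ℕ → Ω → ℝ} (hX : ∀ n, Measurable[ℱ n] (X (n + 1)))
    (hXmono : ∀ᵐ ω ∂P, Monotone fun n => X n ω) {c : ℝ} (hc : 0 ≤ c)
    (hQX : ∀ᵐ ω ∂P, ∀ n, predictableQuadVar Y ℱ P n ω ≤ c * X n ω)
    {a b : ℝ} (ha : 0 < a) (hb : 0 ≤ b) :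
    P {ω | ∃ n, X n ω ≤ b ∧ a ≤ Y n ω} ≤ ENNReal.ofReal (c * b / a ^ 2) := by
  have hunion : {ω | ∃ n, X n ω ≤ b ∧ a ≤ Y n ω}
      = ⋃ N, {ω | ∃ n ≤ N, X n ω ≤ b ∧ a ≤ Y n ω} := by
    ext ω
    simp only [Set.mem_ofPred_eq, Set.mem_iUnion]
    exact ⟨fun ⟨n, hn⟩ => ⟨n, n, le_rfl, hn⟩, fun ⟨_, n, _, hn⟩ => ⟨n, hn⟩⟩
  have hmono : Monotone fun N => {ω | ∃ n ≤ N, X n ω ≤ b ∧ a ≤ Y n ω} :=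
    fun _ _ hNM _ ⟨n, hnN, hn⟩ => ⟨n, hnN.trans hNM, hn⟩
  rw [hunion, hmono.measure_iUnion]
  exact iSup_le (hY.measure_exists_le_le_of_horizon hL2 hY0 hX hXmono hc hQX ha hb)

theorem Martingale.ae_eventually_lt_of_predictableQuadVar_le [IsProbabilityMeasure P]
    (hY : Martingale Y ℱ P) (hL2 : ∀ n, MemLp (Y n) 2 P) (hY0 : Y 0 =ᵐ[P] 0)
    {X : ℕ → Ω → ℝ} (hX : ∀ n, Measurable[ℱ n] (X (n + 1)))
    (hXmono : ∀ᵐ ω ∂P, Monotone fun n => X n ω)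
    (hXtop : ∀ᵐ ω ∂P, Tendsto (fun n => X n ω) atTop atTop) {c : ℝ} (hc : 0 ≤ c)
    (hQX : ∀ᵐ ω ∂P, ∀ n, predictableQuadVar Y ℱ P n ω ≤ c * X n ω) :
    ∀ᵐ ω ∂P, ∀ᶠ n in atTop, Y n ω < X n ω := by
  set E : ℕ → Set Ω := fun k => {ω | ∃ n, X n ω ≤ 2 ^ (k + 1) ∧ 2 ^ k ≤ Y n ω}
  have hE : ∀ k, P (E k) ≤ ENNReal.ofReal (2 * c * (1 / 2) ^ k) := fun k => by
    convert hY.measure_exists_le_le hL2 hY0 hX hXmono hc hQX (a := 2 ^ k) (b := 2 ^ (k + 1))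
      (by positivity) (by positivity) using 2
    rw [one_div, inv_pow, pow_succ]
    field_simp
  have hsum : ∑' k, P (E k) ≠ ⊤ := by
    refine ne_top_of_le_ne_top ?_ (ENNReal.tsum_le_tsum hE)
    rw [← ENNReal.ofReal_tsum_of_nonneg (fun k => by positivity)
      ((summable_geometric_two).mul_left (2 * c))]
    exact ENNReal.ofReal_ne_top
  filter_upwards [ae_eventually_notMem hsum, hXtop] with ω hnotE hXω
  obtain ⟨K, hK⟩ := eventually_atTop.1 hnotE
  filter_upwards [hXω.eventually_ge_atTop (2 ^ K)] with n hn
  by_contra! hXY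
  obtain ⟨k, hk, hk'⟩ := exists_nat_pow_near (one_le_pow₀ one_le_two |>.trans hn) one_lt_two
  have hKk : K ≤ k := by
    have := hn.trans_lt hk'
    rw [pow_lt_pow_iff_right₀ one_lt_two] at this
    omega
  exact hK k hKk ⟨n, hk'.le, hk.trans hXY⟩

def Filtration.shift (ℱ : Filtration ℕ m0) : Filtration ℕ m0 :=
  ⟨fun n => ℱ (n + 1), fun _ _ h => ℱ.mono (Nat.add_le_add_right h 1), fun n => ℱ.le (n + 1)⟩

theorem Martingale.shift (hY : Martingale Y ℱ P) :
    Martingale (fun n => Y (n + 1)) ℱ.shift P :=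
  ⟨fun n => hY.stronglyAdapted (n + 1),
    fun _ _ hij => hY.condExp_ae_eq (Nat.add_le_add_right hij 1)⟩

theorem memLp_of_abs_sub_le [IsFiniteMeasure P] {p : ENNReal}
    (hY : ∀ n, AEStronglyMeasurable (Y n) P) (hY0 : MemLp (Y 0) p P) {α : ℝ}
    (hbdd : ∀ n, ∀ᵐ ω ∂P, |Y (n + 1) ω - Y n ω| ≤ α) (n : ℕ) : MemLp (Y n) p P := by
  induction n with
  | zero => exact hY0
  | succ n ih =>
    have hinc : MemLp (Y (n + 1) - Y n) p P :=
      MemLp.of_bound ((hY (n + 1)).sub (hY n)) α (hbdd n)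
    simpa using ih.add hinc

theorem predictableQuadVar_shift (n : ℕ) :
    predictableQuadVar (fun n => Y (n + 1)) ℱ.shift P n
      = ∑ τ ∈ Finset.Icc 2 (n + 1), P[fun ω => (Y τ ω - Y (τ - 1) ω) ^ 2 | ℱ (τ - 1)] := by
  refine Finset.sum_nbij' (· + 2) (· - 2) ?_ ?_ ?_ ?_ fun i _ => rfl <;>
    · intro i hi; simp only [Finset.mem_range, Finset.mem_Icc] at hi ⊢; omega

end MeasureTheory

theorem martingale_eventually_below_compensator_general
    {Ω : Type*} {m0 : MeasurableSpace Ω} {P : Measure Ω} [IsProbabilityMeasure P]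
    (ℱ : Filtration ℕ m0) (Y X W : ℕ → Ω → ℝ) (α c₁ : ℝ) (hc₁ : 0 < c₁)
    (hY : Martingale Y ℱ P)
    (hY1 : ∀ᵐ ω ∂P, Y 1 ω = 0)
    (hbdd : ∀ t : ℕ, 2 ≤ t → ∀ᵐ ω ∂P, |Y t ω - Y (t - 1) ω| ≤ α)
    (hXmeas : ∀ t : ℕ, 2 ≤ t → Measurable[ℱ (t - 1)] (X t))
    (hXincr : ∀ᵐ ω ∂P, ∀ t : ℕ, X t ω ≤ X (t + 1) ω)
    (hXtop : ∀ᵐ ω ∂P, Tendsto (fun t => X t ω) atTop atTop)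
    (hW : ∀ t : ℕ, W t
      = fun ω => ∑ τ ∈ Finset.Icc 2 t,
          (P[(fun ω' => (Y τ ω' - Y (τ - 1) ω') ^ 2)|ℱ (τ - 1)]) ω)
    (hWX : ∀ᵐ ω ∂P, ∀ t : ℕ, W t ω ≤ c₁ * X t ω) :
    ∀ᵐ ω ∂P, {t : ℕ | X t ω ≤ Y t ω}.Finite := by
  have hY' := hY.shift
  have hL2 : ∀ n, MemLp (Y (n + 1)) 2 P :=
    memLp_of_abs_sub_le
      (fun n => ((hY'.stronglyMeasurable n).mono (ℱ.shift.le n)).aestronglyMeasurable)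
      (MemLp.zero.ae_eq (EventuallyEq.symm hY1)) fun n => hbdd (n + 2) le_add_self
  have hQX : ∀ᵐ ω ∂P, ∀ n,
      predictableQuadVar (fun n => Y (n + 1)) ℱ.shift P n ω ≤ c₁ * X (n + 1) ω := by
    filter_upwards [hWX] with ω h n
    simpa [predictableQuadVar_shift, hW] using h (n + 1)
  have hbelow := hY'.ae_eventually_lt_of_predictableQuadVar_le hL2 hY1
    (fun n => hXmeas (n + 2) le_add_self)
    (hXincr.mono fun _ h => monotone_nat_of_le_succ fun n => h (n + 1))
    (hXtop.mono fun _ h => (tendsto_add_atTop_iff_nat 1).2 h) hc₁.le hQX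
  filter_upwards [hbelow] with ω h
  have h' : ∀ᶠ t in cofinite, Y t ω < X t ω := by
    rw [Nat.cofinite_eq_atTop, ← map_add_atTop_eq_nat 1]
    exact h
  simpa using eventually_cofinite.1 h'

/-- Let `(Y_t)` be a real martingale w.r.t. a filtration `(ℱ_t)` on a
probability space, with `Y_1 = 0` and increments bounded by `α > 0` a.s.  Let `(X_t)`
be a predictable process with a.s. nonnegative increments and `X_t → ∞`, and let
`W_t = Σ_{τ=2}^t E[(Y_τ − Y_{τ−1})² | ℱ_{τ−1}]` be the predictable quadratic variation
of `Y`.  If a.s. `W_t ≤ c₁ X_t` for all `t` for some constant `c₁ > 0`, then almost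
surely `Y_t ≥ X_t` for only finitely many `t`. -/
theorem martingale_eventually_below_compensator
    {Ω : Type*} {m0 : MeasurableSpace Ω} {P : Measure Ω} [IsProbabilityMeasure P]
    (ℱ : Filtration ℕ m0) (Y X W : ℕ → Ω → ℝ) (α c₁ : ℝ) (hα : 0 < α) (hc₁ : 0 < c₁)
    (hY : Martingale Y ℱ P)
    (hY1 : ∀ᵐ ω ∂P, Y 1 ω = 0)
    (hbdd : ∀ t : ℕ, 2 ≤ t → ∀ᵐ ω ∂P, |Y t ω - Y (t - 1) ω| ≤ α)
    (hXmeas : ∀ t : ℕ, 2 ≤ t → Measurable[ℱ (t - 1)] (X t))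
    (hXincr : ∀ᵐ ω ∂P, ∀ t : ℕ, X t ω ≤ X (t + 1) ω)
    (hXtop : ∀ᵐ ω ∂P, Tendsto (fun t => X t ω) atTop atTop)
    (hW : ∀ t : ℕ, W t
      = fun ω => ∑ τ ∈ Finset.Icc 2 t,
          (P[(fun ω' => (Y τ ω' - Y (τ - 1) ω') ^ 2)|ℱ (τ - 1)]) ω)
    (hWX : ∀ᵐ ω ∂P, ∀ t : ℕ, W t ω ≤ c₁ * X t ω) :
    ∀ᵐ ω ∂P, {t : ℕ | X t ω ≤ Y t ω}.Finite :=
  martingale_eventually_below_compensator_general ℱ Y X W α c₁ hc₁ hY hY1 hbdd hXmeas hXincr hXtop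
    hW hWX
end

section
/- In the interacting Pólya urn model, fix an agent i with true bias parameter γ_i ≠ 1, and let φ_i = 1 if γ_i > 1 and φ_i = 0 if γ_i < 1 (the inherent belief). Define the inherent belief estimator φ̂_i(t) = 1 if Σ_{τ=2}^t ψ_{i,τ} > Σ_{τ=1}^{t−1} μ_i(τ), and φ̂_i(t) = 0 otherwise. Then almost surely φ̂_i(t) = φ_i for all sufficiently large t. -/
/-!
Compare the true, `γ`-biased, law of agent `i`'s declarations with the unbiased law (`γ = 1`)
along the observed averages `μ_i(τ)`. The likelihood ratio of the unbiased law against the true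
one is a positive martingale, hence almost surely bounded, and its logarithm `L` satisfies
`log γ · Σ_τ (ψ_{i,τ+1} - μ_i(τ)) = Σ_τ g(μ_i(τ)) - L`, where `g x = log (1 + (γ - 1) x) - x log γ`.
The gap `g` is concave and vanishes only at `0` and `1`, while the initial weights `b^0, b^1`
keep `μ_i(τ)` at distance `≳ 1/τ` from `{0, 1}`; so `Σ_τ g(μ_i(τ))` grows like the harmonic
series, and the sign of `Σ ψ - Σ μ` is eventually that of `log γ`.
-/

open MeasureTheory Filter

/-- `β_i(t) = (b_i^1 + Σ_{τ=2}^t ψ_{i,τ})/t`, the time-averaged declarations of agent `i`. -/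
noncomputable def declAvg {Ω : Type*} {n : ℕ} (b1 : Fin n → ℝ)
    (ψ : Fin n → ℕ → Ω → ℝ) (i : Fin n) (t : ℕ) (ω : Ω) : ℝ :=
  (b1 i + ∑ τ ∈ Finset.Icc 2 t, ψ i τ ω) / t

/-- `μ_i(t) = (1/deg(i)) Σ_j a_{i,j} β_j(t)`, the observed neighborhood average. -/
noncomputable def obsAvg {Ω : Type*} {n : ℕ} (a : Fin n → Fin n → ℝ) (b1 : Fin n → ℝ)
    (ψ : Fin n → ℕ → Ω → ℝ) (i : Fin n) (t : ℕ) (ω : Ω) : ℝ :=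
  (∑ j, a i j * declAvg b1 ψ j t ω) / (∑ j, a i j)

/-- The inherent belief estimator: `φ̂_i(t) = 1` if
`Σ_{τ=2}^t ψ_{i,τ} > Σ_{τ=1}^{t−1} μ_i(τ)`, and `φ̂_i(t) = 0` otherwise. -/
noncomputable def beliefEstimator {Ω : Type*} {n : ℕ} (a : Fin n → Fin n → ℝ)
    (b1 : Fin n → ℝ) (ψ : Fin n → ℕ → Ω → ℝ) (i : Fin n) (t : ℕ) (ω : Ω) : ℝ :=
  if (∑ τ ∈ Finset.Icc 1 (t - 1), obsAvg a b1 ψ i τ ω) < ∑ τ ∈ Finset.Icc 2 t, ψ i τ ω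
    then 1 else 0

open Finset Real

lemma one_add_sub_one_mul_pos {γ x : ℝ} (hγ : 0 < γ) (hx : x ∈ Set.Icc (0 : ℝ) 1) :
    0 < 1 + (γ - 1) * x := by
  obtain ⟨hx0, hx1⟩ := hx
  rcases hx1.lt_or_eq with hx1 | rfl <;> nlinarith

lemma abs_one_add_sub_one_mul_le {γ x : ℝ} (hγ : 0 < γ) (hx : x ∈ Set.Icc (0 : ℝ) 1) :
    |1 + (γ - 1) * x| ≤ 1 + γ := by
  rw [abs_of_pos (one_add_sub_one_mul_pos hγ hx)]
  nlinarith [hx.1, hx.2]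

lemma exp_log_sub_mul_log {d γ x : ℝ} (hd : 0 < d) (hγ : 0 < γ) (hx : x = 0 ∨ x = 1) :
    exp (log d - x * log γ) = d * (1 + (γ⁻¹ - 1) * x) := by
  rcases hx with rfl | rfl
  · simp [exp_log hd]
  · rw [one_mul, exp_sub, exp_log hd, exp_log hγ]
    ring

/-- The gap `g x = log (1 + (γ - 1) x) - x log γ` is concave and vanishes at `0` and `1`, so it
lies above the two chords through `(1/2, g (1/2))`; and `g (1/2) > 0` is AM-GM for `1` and `γ`. -/
lemma exists_pos_mul_min_le_log_one_add_sub_mul_log {γ : ℝ} (hγ : 0 < γ) (hγ1 : γ ≠ 1) :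
    ∃ c > 0, ∀ x ∈ Set.Icc (0 : ℝ) 1,
      c * min x (1 - x) ≤ log (1 + (γ - 1) * x) - x * log γ := by
  set A : ℝ := (1 + γ) / 2 with hA_def
  have hA : 0 < A := by positivity
  refine ⟨2 * (log A - log γ / 2), ?_, fun x ⟨hx0, hx1⟩ => ?_⟩
  · have hsqrt : √γ < A := by
      have hne : √γ ≠ 1 := fun h => hγ1 (by rw [← sq_sqrt hγ.le, h, one_pow])
      have hsq := sq_sqrt hγ.le
      nlinarith [sq_pos_of_ne_zero (sub_ne_zero.2 hne)]
    have := log_lt_log (sqrt_pos.2 hγ) hsqrt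
    rw [log_sqrt hγ.le] at this
    linarith
  have hconc := strictConcaveOn_log_Ioi.concaveOn.2 (Set.mem_Ioi.2 hA)
  rcases le_total x (1 / 2) with hx | hx
  · have key := hconc (Set.mem_Ioi.2 one_pos) (by linarith : (0 : ℝ) ≤ 2 * x)
      (by linarith : (0 : ℝ) ≤ 1 - 2 * x) (by ring)
    simp only [smul_eq_mul, log_one, mul_zero, add_zero] at key
    rw [show 2 * x * A + (1 - 2 * x) * 1 = 1 + (γ - 1) * x by ring] at key
    rw [min_eq_left (by linarith)]
    nlinarith
  · have key := hconc (Set.mem_Ioi.2 hγ) (by linarith : (0 : ℝ) ≤ 2 * (1 - x))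
      (by linarith : (0 : ℝ) ≤ 2 * x - 1) (by ring)
    simp only [smul_eq_mul] at key
    rw [show 2 * (1 - x) * A + (2 * x - 1) * γ = 1 + (γ - 1) * x by ring] at key
    rw [min_eq_right (by linarith)]
    nlinarith

lemma tendsto_sum_range_log_one_add_sub_mul_log_atTop {γ ε : ℝ} (hγ : 0 < γ) (hγ1 : γ ≠ 1)
    (hε : 0 < ε) {q : ℕ → ℝ} (hq : ∀ τ : ℕ, q τ ∈ Set.Icc (ε / (τ + 1)) (1 - ε / (τ + 1))) :
    Tendsto (fun s => ∑ τ ∈ range s, (log (1 + (γ - 1) * q τ) - q τ * log γ)) atTop atTop := by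
  obtain ⟨c, hc, hgap⟩ := exists_pos_mul_min_le_log_one_add_sub_mul_log hγ hγ1
  refine tendsto_atTop_mono (fun s => ?_)
    ((tendsto_sum_range_one_div_nat_succ_atTop.const_mul_atTop (mul_pos hc hε)))
  rw [mul_sum]
  refine sum_le_sum fun τ _ => ?_
  obtain ⟨hlo, hhi⟩ := hq τ
  have hετ : 0 ≤ ε / (τ + 1) := by positivity
  calc c * ε * (1 / ((τ : ℝ) + 1)) = c * (ε / (τ + 1)) := by ring
    _ ≤ c * min (q τ) (1 - q τ) := by gcongr; exact le_min hlo (by linarith)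
    _ ≤ _ := hgap (q τ) ⟨by linarith, by linarith⟩

lemma tendsto_log_mul_sum_sub_atTop {γ ε : ℝ} (hγ : 0 < γ) (hγ1 : γ ≠ 1) (hε : 0 < ε)
    {q x : ℕ → ℝ} (hq : ∀ τ : ℕ, q τ ∈ Set.Icc (ε / (τ + 1)) (1 - ε / (τ + 1)))
    (hL : BddAbove (Set.range fun s =>
      ∑ τ ∈ range s, (log (1 + (γ - 1) * q τ) - x τ * log γ))) :
    Tendsto (fun s => log γ * ∑ τ ∈ range s, (x τ - q τ)) atTop atTop := by
  obtain ⟨K, hK⟩ := hL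
  refine tendsto_atTop_mono (fun s => ?_) (tendsto_atTop_add_const_right _ (-K)
    (tendsto_sum_range_log_one_add_sub_mul_log_atTop hγ hγ1 hε hq))
  have hLs := hK ⟨s, rfl⟩
  have hsplit : log γ * ∑ τ ∈ range s, (x τ - q τ)
      = ∑ τ ∈ range s, (log (1 + (γ - 1) * q τ) - q τ * log γ)
        - ∑ τ ∈ range s, (log (1 + (γ - 1) * q τ) - x τ * log γ) := by
    rw [mul_sum, ← sum_sub_distrib]
    exact sum_congr rfl fun τ _ => by ring
  simp only at hLs
  linarith

def MeasureTheory.Filtration.shift_s13 {Ω : Type*} {m0 : MeasurableSpace Ω}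
    (ℱ : Filtration ℕ m0) (k : ℕ) : Filtration ℕ m0 where
  seq s := ℱ (s + k)
  mono' _ _ h := ℱ.mono (Nat.add_le_add_right h k)
  le' s := ℱ.le (s + k)

theorem MeasureTheory.Martingale.ae_bddAbove_range_of_nonneg {Ω : Type*} {m0 : MeasurableSpace Ω}
    {P : Measure Ω} [IsFiniteMeasure P] {ℱ : Filtration ℕ m0} {f : ℕ → Ω → ℝ}
    (hf : Martingale f ℱ P) (hf_nonneg : ∀ n ω, 0 ≤ f n ω) :
    ∀ᵐ ω ∂P, BddAbove (Set.range fun n => f n ω) := by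
  have hbdd : ∀ n, eLpNorm (f n) 1 P ≤ (∫ ω, f 0 ω ∂P).toNNReal := fun n => by
    have hmean : ∫ ω, f n ω ∂P = ∫ ω, f 0 ω ∂P := by
      simpa using (hf.setIntegral_eq (Nat.zero_le n) MeasurableSet.univ).symm
    rw [eLpNorm_one_eq_lintegral_enorm, ← hmean, ← ENNReal.ofReal.eq_def,
      ofReal_integral_eq_lintegral_ofReal (hf.integrable n) (ae_of_all _ (hf_nonneg n))]
    exact (lintegral_congr fun ω => Real.enorm_of_nonneg (hf_nonneg n ω)).le
  filter_upwards [hf.submartingale.ae_tendsto_limitProcess hbdd] with ω hω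
  exact hω.bddAbove_range

section LikelihoodRatio

variable {Ω : Type*} {m0 : MeasurableSpace Ω} {P : Measure Ω} {ℱ : Filtration ℕ m0}
  {γ : ℝ} {q X : ℕ → Ω → ℝ}

/-- Log-likelihood ratio, after `s` rounds, of the unbiased model against the `γ`-biased one, when
round `τ` declares `X (τ + 1)` and `q τ` is its probability of being `1` in the unbiased model. -/
noncomputable def logLikelihoodRatio (γ : ℝ) (q X : ℕ → Ω → ℝ) (s : ℕ) (ω : Ω) : ℝ :=
  ∑ τ ∈ range s, (log (1 + (γ - 1) * q τ ω) - X (τ + 1) ω * log γ)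

lemma exp_logLikelihoodRatio_succ (hγ : 0 < γ) {s : ℕ} {ω : Ω} (hq : q s ω ∈ Set.Icc (0 : ℝ) 1)
    (hX : X (s + 1) ω = 0 ∨ X (s + 1) ω = 1) :
    exp (logLikelihoodRatio γ q X (s + 1) ω) = exp (logLikelihoodRatio γ q X s ω) *
      (1 + (γ - 1) * q s ω) * (1 + (γ⁻¹ - 1) * X (s + 1) ω) := by
  rw [logLikelihoodRatio, sum_range_succ, exp_add,
    exp_log_sub_mul_log (one_add_sub_one_mul_pos hγ hq) hγ hX, ← mul_assoc]
  rfl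

lemma measurable_logLikelihoodRatio (hq : ∀ s, Measurable[ℱ s] (q s))
    (hX : ∀ s, Measurable[ℱ (s + 1)] (X (s + 1))) (s : ℕ) :
    Measurable[ℱ s] (logLikelihoodRatio γ q X s) := by
  refine Finset.measurable_sum _ fun τ hτ => ?_
  have hτs : τ + 1 ≤ s := mem_range.1 hτ
  exact ((((hq τ).mono (ℱ.mono (by omega)) le_rfl).const_mul _).const_add _).log.sub
    (((hX τ).mono (ℱ.mono hτs) le_rfl).mul_const _)

lemma integrable_exp_logLikelihoodRatio [IsFiniteMeasure P] (hγ : 0 < γ)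
    (hq : ∀ s, Measurable[ℱ s] (q s)) (hq01 : ∀ s ω, q s ω ∈ Set.Icc (0 : ℝ) 1)
    (hX : ∀ s, Measurable[ℱ (s + 1)] (X (s + 1))) (hX01 : ∀ s ω, X s ω = 0 ∨ X s ω = 1)
    (s : ℕ) : Integrable (fun ω => exp (logLikelihoodRatio γ q X s ω)) P := by
  induction s with
  | zero => simp [logLikelihoodRatio]
  | succ s ih =>
    have hX01' : ∀ ω, X (s + 1) ω ∈ Set.Icc (0 : ℝ) 1 := fun ω => by
      rcases hX01 (s + 1) ω with h | h <;> simp [h]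
    have hfactor_meas : Measurable fun ω => (1 + (γ - 1) * q s ω) * (1 + (γ⁻¹ - 1) * X (s + 1) ω) :=
      ((((hq s).mono (ℱ.le s) le_rfl).const_mul _).const_add _).mul
        ((((hX s).mono (ℱ.le _) le_rfl).const_mul _).const_add _)
    have hfactor_bdd : ∀ ω, ‖(1 + (γ - 1) * q s ω) * (1 + (γ⁻¹ - 1) * X (s + 1) ω)‖
        ≤ (1 + γ) * (1 + γ⁻¹) := fun ω => by
      rw [norm_mul, Real.norm_eq_abs, Real.norm_eq_abs]
      exact mul_le_mul (abs_one_add_sub_one_mul_le hγ (hq01 s ω))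
        (abs_one_add_sub_one_mul_le (inv_pos.2 hγ) (hX01' ω)) (abs_nonneg _) (by positivity)
    refine (ih.bdd_mul hfactor_meas.aestronglyMeasurable (ae_of_all _ hfactor_bdd)).congr
      (ae_of_all _ fun ω => ?_)
    simp only
    rw [exp_logLikelihoodRatio_succ hγ (hq01 s ω) (hX01 (s + 1) ω)]
    ring

theorem martingale_exp_logLikelihoodRatio [IsFiniteMeasure P] (hγ : 0 < γ)
    (hq : ∀ s, Measurable[ℱ s] (q s)) (hq01 : ∀ s ω, q s ω ∈ Set.Icc (0 : ℝ) 1)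
    (hX : ∀ s, Measurable[ℱ (s + 1)] (X (s + 1))) (hX01 : ∀ s ω, X s ω = 0 ∨ X s ω = 1)
    (hcond : ∀ s, P[X (s + 1)|ℱ s] =ᵐ[P] fun ω => declProb (q s ω) γ) :
    Martingale (fun s ω => exp (logLikelihoodRatio γ q X s ω)) ℱ P := by
  set W : ℕ → Ω → ℝ := fun s ω => exp (logLikelihoodRatio γ q X s ω)
  have hW_int := integrable_exp_logLikelihoodRatio (P := P) hγ hq hq01 hX hX01
  refine martingale_nat (fun s => (measurable_logLikelihoodRatio hq hX s).exp.stronglyMeasurable)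
    hW_int fun s => ?_
  set U : Ω → ℝ := fun ω => W s ω * (1 + (γ - 1) * q s ω)
  set V : Ω → ℝ := fun ω => U ω * (γ⁻¹ - 1)
  have hsplit : W (s + 1) = U + V * X (s + 1) := by
    funext ω
    simp only [W, U, V, Pi.add_apply, Pi.mul_apply]
    rw [exp_logLikelihoodRatio_succ hγ (hq01 s ω) (hX01 (s + 1) ω)]
    ring
  have hq_meas : Measurable[ℱ s] fun ω => 1 + (γ - 1) * q s ω := ((hq s).const_mul _).const_add _
  have hU_meas : Measurable[ℱ s] U :=
    (measurable_logLikelihoodRatio hq hX s).exp.mul hq_meas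
  have hU_int : Integrable U P :=
    (hW_int s).mul_bdd (hq_meas.mono (ℱ.le s) le_rfl).aestronglyMeasurable
      (ae_of_all _ fun ω =>
        (Real.norm_eq_abs _).trans_le (abs_one_add_sub_one_mul_le hγ (hq01 s ω)))
  have hX_int : Integrable (X (s + 1)) P :=
    .of_bound ((hX s).mono (ℱ.le _) le_rfl).aestronglyMeasurable 1
      (ae_of_all _ fun ω => by rcases hX01 (s + 1) ω with h | h <;> simp [h])
  have hVX_int : Integrable (V * X (s + 1)) P := by
    rw [show V * X (s + 1) = W (s + 1) - U by rw [hsplit, add_sub_cancel_left]]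
    exact (hW_int (s + 1)).sub hU_int
  rw [hsplit]
  filter_upwards [condExp_add hU_int hVX_int (ℱ s),
    condExp_mul_of_stronglyMeasurable_left (hU_meas.mul_const _).stronglyMeasurable hVX_int hX_int,
    hcond s] with ω h_add h_mul h_cond
  rw [h_add, Pi.add_apply, condExp_of_stronglyMeasurable (ℱ.le s) hU_meas.stronglyMeasurable hU_int,
    h_mul, Pi.mul_apply, h_cond]
  have hd := (one_add_sub_one_mul_pos hγ (hq01 s ω)).ne'
  simp only [U, declProb]
  field_simp
  ring

theorem ae_bddAbove_logLikelihoodRatio [IsFiniteMeasure P] (hγ : 0 < γ)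
    (hq : ∀ s, Measurable[ℱ s] (q s)) (hq01 : ∀ s ω, q s ω ∈ Set.Icc (0 : ℝ) 1)
    (hX : ∀ s, Measurable[ℱ (s + 1)] (X (s + 1))) (hX01 : ∀ s ω, X s ω = 0 ∨ X s ω = 1)
    (hcond : ∀ s, P[X (s + 1)|ℱ s] =ᵐ[P] fun ω => declProb (q s ω) γ) :
    ∀ᵐ ω ∂P, BddAbove (Set.range fun s => logLikelihoodRatio γ q X s ω) := by
  filter_upwards [(martingale_exp_logLikelihoodRatio hγ hq hq01 hX hX01 hcond
    ).ae_bddAbove_range_of_nonneg fun _ _ => (exp_pos _).le] with ω ⟨K, hK⟩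
  refine ⟨log K, ?_⟩
  rintro _ ⟨s, rfl⟩
  exact (log_exp _).symm.le.trans (log_le_log (exp_pos _) (hK ⟨s, rfl⟩))

end LikelihoodRatio

section UrnModel

variable {Ω : Type*} {n : ℕ} {a : Fin n → Fin n → ℝ} {b1 : Fin n → ℝ} {ψ : Fin n → ℕ → Ω → ℝ}

lemma declAvg_mem_Icc {b0j : ℝ} {j : Fin n} (hb : b0j + b1 j = 1)
    (hψ : ∀ τ ω, ψ j τ ω ∈ Set.Icc (0 : ℝ) 1) {t : ℕ} (ht : 1 ≤ t) (ω : Ω) :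
    declAvg b1 ψ j t ω ∈ Set.Icc (b1 j / t) (1 - b0j / t) := by
  have ht' : (0 : ℝ) < t := by exact_mod_cast ht
  have hsum_nonneg : 0 ≤ ∑ τ ∈ Icc 2 t, ψ j τ ω := sum_nonneg fun τ _ => (hψ τ ω).1
  have hsum_le : ∑ τ ∈ Icc 2 t, ψ j τ ω ≤ t - 1 := by
    calc ∑ τ ∈ Icc 2 t, ψ j τ ω ≤ ∑ τ ∈ Icc 2 t, (1 : ℝ) := sum_le_sum fun τ _ => (hψ τ ω).2
      _ = t - 1 := by
          rw [sum_const, Nat.card_Icc, nsmul_one, show t + 1 - 2 = t - 1 by omega,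
            Nat.cast_sub ht, Nat.cast_one]
  rw [declAvg, Set.mem_Icc, div_le_div_iff_of_pos_right ht', div_le_iff₀ ht', sub_mul,
    div_mul_cancel₀ _ ht'.ne']
  constructor <;> linarith

lemma obsAvg_mem_of_forall_declAvg_mem {s : Set ℝ} (hs : Convex ℝ s) {i : Fin n}
    (ha : ∀ j, 0 ≤ a i j) (hdeg : 0 < ∑ j, a i j) {t : ℕ} {ω : Ω}
    (h : ∀ j, declAvg b1 ψ j t ω ∈ s) : obsAvg a b1 ψ i t ω ∈ s := by
  simpa [Finset.centerMass, obsAvg, div_eq_inv_mul] using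
    hs.centerMass_mem (fun j _ => ha j) hdeg fun j _ => h j

lemma obsAvg_mem_Icc {b0 : Fin n → ℝ} {ε : ℝ} (hb : ∀ j, b0 j + b1 j = 1)
    (hεb0 : ∀ j, ε ≤ b0 j) (hεb1 : ∀ j, ε ≤ b1 j) (hψ : ∀ j τ ω, ψ j τ ω ∈ Set.Icc (0 : ℝ) 1)
    {i : Fin n} (ha : ∀ j, 0 ≤ a i j) (hdeg : 0 < ∑ j, a i j) {t : ℕ} (ht : 1 ≤ t) (ω : Ω) :
    obsAvg a b1 ψ i t ω ∈ Set.Icc (ε / t) (1 - ε / t) :=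
  obsAvg_mem_of_forall_declAvg_mem (convex_Icc _ _) ha hdeg fun j =>
    Set.Icc_subset_Icc (div_le_div_of_nonneg_right (hεb1 j) t.cast_nonneg)
      (sub_le_sub_left (div_le_div_of_nonneg_right (hεb0 j) t.cast_nonneg) 1)
      (declAvg_mem_Icc (hb j) (hψ j) ht ω)

lemma measurable_obsAvg {m : MeasurableSpace Ω} {i : Fin n} {t : ℕ}
    (hψ : ∀ j, ∀ τ ∈ Icc 2 t, Measurable[m] (ψ j τ)) : Measurable[m] (obsAvg a b1 ψ i t) :=
  (Finset.measurable_sum _ fun j _ =>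
    (((Finset.measurable_sum _ (hψ j)).const_add _).div_const _).const_mul _).div_const _

lemma beliefEstimator_eq_of_log_mul_pos {γ : ℝ} (hγ : 0 < γ) {i : Fin n} {t : ℕ} {ω : Ω}
    (h : 0 < log γ * ∑ τ ∈ range (t - 1), (ψ i (τ + 2) ω - obsAvg a b1 ψ i (τ + 1) ω)) :
    beliefEstimator a b1 ψ i t ω = if 1 < γ then 1 else 0 := by
  have hreindex : ∑ τ ∈ range (t - 1), (ψ i (τ + 2) ω - obsAvg a b1 ψ i (τ + 1) ω)
      = ∑ τ ∈ Icc 2 t, ψ i τ ω - ∑ τ ∈ Icc 1 (t - 1), obsAvg a b1 ψ i τ ω := by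
    rw [← Ico_add_one_right_eq_Icc, ← Ico_add_one_right_eq_Icc, sum_Ico_eq_sum_range,
      sum_Ico_eq_sum_range, show t + 1 - 2 = t - 1 by omega,
      show t - 1 + 1 - 1 = t - 1 by omega, ← sum_sub_distrib]
    exact sum_congr rfl fun τ _ => by rw [add_comm 2, add_comm 1]
  rw [hreindex] at h
  rw [beliefEstimator]
  rcases pos_and_pos_or_neg_and_neg_of_mul_pos h with ⟨hlog, hdiff⟩ | ⟨hlog, hdiff⟩
  · rw [if_pos (by linarith), if_pos ((log_pos_iff hγ.le).1 hlog)]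
  · rw [if_neg (by linarith), if_neg ((log_neg_iff hγ).1 hlog).not_gt]

end UrnModel

theorem belief_estimator_eventually_correct_general
    {Ω : Type*} {m0 : MeasurableSpace Ω} (P : Measure Ω) [IsProbabilityMeasure P]
    (ℱ : Filtration ℕ m0)
    (n : ℕ)
    (a : Fin n → Fin n → ℝ)
    (ha_nonneg : ∀ i j, 0 ≤ a i j) (hdeg : ∀ i, 0 < ∑ j, a i j)
    (γ : Fin n → ℝ) (hγ : ∀ i, 0 < γ i)
    (b0 b1 : Fin n → ℝ) (hb0 : ∀ i, 0 < b0 i) (hb1 : ∀ i, 0 < b1 i)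
    (hb : ∀ i, b0 i + b1 i = 1)
    (ψ : Fin n → ℕ → Ω → ℝ)
    (hψ01 : ∀ i t ω, ψ i t ω = 0 ∨ ψ i t ω = 1)
    (hψ_adapted : ∀ (i : Fin n) (t : ℕ), 2 ≤ t → Measurable[ℱ t] (ψ i t))
    (hdyn : ∀ (i : Fin n) (t : ℕ), 1 ≤ t →
      P[ψ i (t + 1)|ℱ t] =ᵐ[P] fun ω => declProb (obsAvg a b1 ψ i t ω) (γ i))
    (i : Fin n) (hγi : γ i ≠ 1) :
    ∀ᵐ ω ∂P, ∀ᶠ t in atTop,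
      beliefEstimator a b1 ψ i t ω = if 1 < γ i then 1 else 0 := by
  obtain ⟨ε, hε, hεb0, hεb1⟩ : ∃ ε > 0, (∀ j, ε ≤ b0 j) ∧ ∀ j, ε ≤ b1 j :=
    ⟨univ.inf' ⟨i, mem_univ i⟩ fun j => min (b0 j) (b1 j),
      (lt_inf'_iff _).2 fun j _ => lt_min (hb0 j) (hb1 j),
      fun j => (inf'_le _ (mem_univ j)).trans (min_le_left _ _),
      fun j => (inf'_le _ (mem_univ j)).trans (min_le_right _ _)⟩
  have hψ_mem : ∀ j τ ω, ψ j τ ω ∈ Set.Icc (0 : ℝ) 1 := fun j τ ω => by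
    rcases hψ01 j τ ω with h | h <;> simp [h]
  have hq : ∀ (s : ℕ) ω, obsAvg a b1 ψ i (s + 1) ω ∈ Set.Icc (ε / (s + 1)) (1 - ε / (s + 1)) :=
    fun s ω => by
      exact_mod_cast obsAvg_mem_Icc hb hεb0 hεb1 hψ_mem (ha_nonneg i) (hdeg i) le_add_self ω
  filter_upwards [ae_bddAbove_logLikelihoodRatio (ℱ := ℱ.shift_s13 1) (hγ i)
    (fun s => measurable_obsAvg fun j τ hτ =>
      (hψ_adapted j τ (mem_Icc.1 hτ).1).mono (ℱ.mono (mem_Icc.1 hτ).2) le_rfl)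
    (fun s ω => Set.Icc_subset_Icc (by positivity) (sub_le_self _ (by positivity)) (hq s ω))
    (fun s => hψ_adapted i (s + 1 + 1) le_add_self) (fun s ω => hψ01 i (s + 1) ω)
    (fun s => hdyn i (s + 1) le_add_self)] with ω hL
  have hdrift := tendsto_log_mul_sum_sub_atTop (hγ i) hγi hε (fun s => hq s ω) hL
  filter_upwards [(hdrift.comp (tendsto_sub_atTop_nat 1)).eventually_gt_atTop 0] with t ht
  exact beliefEstimator_eq_of_log_mul_pos (hγ i) ht

/-- In the interacting Pólya urn model, fix an agent `i` with true bias
parameter `γ_i ≠ 1`, and let `φ_i = 1` if `γ_i > 1` and `φ_i = 0` if `γ_i < 1` (the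
inherent belief). Then almost surely the inherent belief estimator `φ̂_i(t)` equals
`φ_i` for all sufficiently large `t`. -/
theorem belief_estimator_eventually_correct
    {Ω : Type*} {m0 : MeasurableSpace Ω} (P : Measure Ω) [IsProbabilityMeasure P]
    (ℱ : Filtration ℕ m0)
    (n : ℕ) (hn : 1 ≤ n)
    (a : Fin n → Fin n → ℝ) (ha_symm : ∀ i j, a i j = a j i)
    (ha_nonneg : ∀ i j, 0 ≤ a i j) (hdeg : ∀ i, 0 < ∑ j, a i j)
    (γ : Fin n → ℝ) (hγ : ∀ i, 0 < γ i)
    (b0 b1 : Fin n → ℝ) (hb0 : ∀ i, 0 < b0 i) (hb1 : ∀ i, 0 < b1 i)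
    (hb : ∀ i, b0 i + b1 i = 1)
    (ψ : Fin n → ℕ → Ω → ℝ)
    (hψ01 : ∀ i t ω, ψ i t ω = 0 ∨ ψ i t ω = 1)
    (hψ_adapted : ∀ (i : Fin n) (t : ℕ), 2 ≤ t → Measurable[ℱ t] (ψ i t))
    (hdyn : ∀ (i : Fin n) (t : ℕ), 1 ≤ t →
      P[ψ i (t + 1)|ℱ t] =ᵐ[P] fun ω => declProb (obsAvg a b1 ψ i t ω) (γ i))
    (i : Fin n) (hγi : γ i ≠ 1) :
    ∀ᵐ ω ∂P, ∀ᶠ t in atTop,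
      beliefEstimator a b1 ψ i t ω = if 1 < γ i then 1 else 0 :=
  belief_estimator_eventually_correct_general P ℱ n a ha_nonneg hdeg γ hγ b0 b1 hb0 hb1 hb ψ hψ01
    hψ_adapted hdyn i hγi
end

section
/- Let (Ω, F, P) be a probability space with a filtration (F_t)_{t ≥ 1}, and let (Y_t)_{t ≥ 1} be a real martingale with Y_1 = 0 and |Y_t − Y_{t−1}| ≤ 1 almost surely for t ≥ 2. Let (X_t)_{t ≥ 2} be a predictable process with almost surely nonnegative increments, let W_t = Σ_{τ=2}^t E[(Y_τ − Y_{τ−1})² | F_{τ−1}], and suppose almost surely W_t ≤ c·X_t for all t, for a constant c > 0. Set ξ = 1/(4c + 2/3). Let g : ℕ → ℝ be nondecreasing with X_t ≥ g(t) almost surely for all t, and let t₀ satisfy g(t₀) ≥ 2. Then for every δ ∈ (0, 1) and every t* ≥ t₀ with g(t*) ≥ (1/ξ)·log(1/(δ·(e^ξ − 1))), we have P[∃ t ≥ t* : Y_t > X_t] ≤ δ. -/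
/-!
The process `S n = exp (2ξ Y n - (e^{2ξ} - 1 - 2ξ) V n)`, with `V` the predictable quadratic
variation of `Y`, is a nonnegative supermartingale with `S 0 = 1`: conditionally on the past,
an increment `D` with `|D| ≤ 1` and mean zero satisfies `E[e^{lD}] ≤ 1 + (e^l - 1 - l) E[D²]`.
The Bernstein bound `e^l - 1 - l ≤ l² / (2 (1 - l/3))` gives `c (e^{2ξ} - 1 - 2ξ) ≤ ξ/2`, so on
the event `Y t > X t ≥ g t*` with `V t ≤ c X t` we get `S t ≥ exp (3ξ g(t*)/2)`. Ville's maximal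
inequality bounds the probability of that by `exp (-3ξ g(t*)/2) ≤ δ`.
-/

open MeasureTheory
open scoped Nat

namespace Real

lemma summable_pow_add_two_div_factorial (x : ℝ) :
    Summable fun n : ℕ => x ^ (n + 2) / (n + 2)! :=
  (summable_nat_add_iff 2).2 (summable_pow_div_factorial x)

lemma exp_sub_one_sub_eq_tsum (x : ℝ) :
    exp x - 1 - x = ∑' n : ℕ, x ^ (n + 2) / (n + 2)! := by
  have h := summable_pow_div_factorial x
  rw [exp_eq_exp_ℝ, NormedSpace.exp_eq_tsum_div]
  dsimp only
  rw [h.tsum_eq_zero_add, ((summable_nat_add_iff 1).2 h).tsum_eq_zero_add]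
  simp

lemma exp_mul_le_of_abs_le {l x : ℝ} (hl : 0 ≤ l) (hx : |x| ≤ 1) :
    exp (l * x) ≤ 1 + l * x + (exp l - 1 - l) * x ^ 2 := by
  have hterm (n : ℕ) : (l * x) ^ (n + 2) / (n + 2)! ≤ l ^ (n + 2) / (n + 2)! * x ^ 2 := by
    have hxn : x ^ n ≤ 1 := (le_abs_self _).trans (abs_pow x n ▸ pow_le_one₀ (abs_nonneg x) hx)
    rw [div_mul_eq_mul_div, mul_pow, pow_add x]
    apply div_le_div_of_nonneg_right _ (by positivity)
    nlinarith [mul_nonneg (mul_nonneg (pow_nonneg hl (n + 2)) (sq_nonneg x)) (sub_nonneg.2 hxn)]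
  have hsum : exp (l * x) - 1 - l * x ≤ (exp l - 1 - l) * x ^ 2 := by
    rw [exp_sub_one_sub_eq_tsum, exp_sub_one_sub_eq_tsum, ← tsum_mul_right]
    exact (summable_pow_add_two_div_factorial _).tsum_le_tsum hterm
      ((summable_pow_add_two_div_factorial l).mul_right _)
  linarith

lemma exp_sub_one_sub_le_sq_div {x : ℝ} (hx0 : 0 ≤ x) (hx3 : x < 3) :
    exp x - 1 - x ≤ x ^ 2 / (2 * (1 - x / 3)) := by
  have hr : x / 3 < 1 := by linarith
  have hterm (n : ℕ) : x ^ (n + 2) / (n + 2)! ≤ x ^ 2 / 2 * (x / 3) ^ n := by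
    have hfact : 2! * (2 + 1) ^ n ≤ (2 + n)! := Nat.factorial_mul_pow_le_factorial
    rw [div_pow, div_mul_div_comm, ← pow_add, add_comm 2 n]
    apply div_le_div_of_nonneg_left (by positivity) (by positivity)
    rw [add_comm 2 n] at hfact
    exact_mod_cast hfact
  calc exp x - 1 - x ≤ ∑' n : ℕ, x ^ 2 / 2 * (x / 3) ^ n := by
        rw [exp_sub_one_sub_eq_tsum]
        exact (summable_pow_add_two_div_factorial x).tsum_le_tsum hterm
          ((summable_geometric_of_lt_one (by positivity) hr).mul_left _)
    _ = x ^ 2 / (2 * (1 - x / 3)) := by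
        rw [tsum_mul_left, tsum_geometric_of_lt_one (by positivity) hr]
        field_simp

lemma mul_exp_two_mul_sub_one_sub_le {c ξ : ℝ} (hc : 0 < c) (hξ : 0 < ξ)
    (h : (4 * c + 2 / 3) * ξ ≤ 1) : c * (exp (2 * ξ) - 1 - 2 * ξ) ≤ ξ / 2 := by
  have hcξ : 0 < 4 * c * ξ := by positivity
  calc c * (exp (2 * ξ) - 1 - 2 * ξ) ≤ c * ((2 * ξ) ^ 2 / (2 * (1 - 2 * ξ / 3))) := by
        gcongr
        exact exp_sub_one_sub_le_sq_div (by positivity) (by nlinarith)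
    _ ≤ c * ((2 * ξ) ^ 2 / (2 * (4 * c * ξ))) := by
        gcongr
        linarith
    _ = ξ / 2 := by
        field_simp
        ring

lemma exp_neg_mul_le_of_log_le {ξ δ K : ℝ} (hξ : 0 < ξ) (hδ : 0 < δ) (hK : 2 ≤ K)
    (h : 1 / ξ * log (1 / (δ * (exp ξ - 1))) ≤ K) : exp (-(3 / 2 * ξ * K)) ≤ δ := by
  have hz : 0 < δ * (exp ξ - 1) := mul_pos hδ (by linarith [add_one_lt_exp hξ.ne'])
  have hlog : log (1 / (δ * (exp ξ - 1))) ≤ ξ * K := by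
    rwa [one_div_mul_eq_div, div_le_iff₀' hξ] at h
  have hexp : exp (-(ξ * K)) ≤ δ * (exp ξ - 1) := by
    rwa [log_le_iff_le_exp (by positivity), one_div, inv_le_comm₀ hz (exp_pos _), ← exp_neg]
      at hlog
  calc exp (-(3 / 2 * ξ * K)) = exp (-(ξ * K)) * exp (-(ξ * K / 2)) := by
        rw [← exp_add]
        ring_nf
    _ ≤ δ * (exp ξ - 1) * exp (-ξ) := by
        gcongr
        nlinarith
    _ = δ * (1 - exp (-ξ)) := by
        rw [exp_neg]
        field_simp
    _ ≤ δ := by nlinarith [exp_pos (-ξ)]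

end Real

open Real

lemma abs_le_of_abs_sub_le_one {y : ℕ → ℝ} (h0 : y 0 = 0) (h : ∀ n, |y (n + 1) - y n| ≤ 1) :
    ∀ n : ℕ, |y n| ≤ n
  | 0 => by simp [h0]
  | n + 1 => by
    have := abs_le_of_abs_sub_le_one h0 h n
    have := abs_sub_abs_le_abs_sub (y (n + 1)) (y n)
    push_cast
    linarith [h n]

section

variable {Ω : Type*} {m0 : MeasurableSpace Ω} {P : Measure Ω}

lemma MeasureTheory.Martingale.ae_eq_zero_of_le {E ι : Type*} [NormedAddCommGroup E]
    [NormedSpace ℝ E] [CompleteSpace E] [Preorder ι] {ℱ : Filtration ι m0} {f : ι → Ω → E}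
    (hf : Martingale f ℱ P) {i j : ι} (hij : i ≤ j) (hj : f j =ᵐ[P] 0) : f i =ᵐ[P] 0 :=
  (hf.condExp_ae_eq hij).symm.trans ((condExp_congr_ae hj).trans (by rw [condExp_zero]))

lemma MeasureTheory.Supermartingale.measure_exists_ge_le [IsFiniteMeasure P]
    {𝒢 : Filtration ℕ m0} {S : ℕ → Ω → ℝ} (hS : Supermartingale S 𝒢 P) (hnonneg : 0 ≤ S)
    {a : ℝ} (ha : 0 < a) :
    P {ω | ∃ n, a ≤ S n ω} ≤ ENNReal.ofReal ((∫ ω, S 0 ω ∂P) / a) := by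
  have hfin (N : ℕ) : P {ω | ∃ n ≤ N, a ≤ S n ω} ≤ ENNReal.ofReal ((∫ ω, S 0 ω ∂P) / a) := by
    set τ : Ω → WithTop ℕ := fun ω => (hittingBtwn S (Set.Ici a) 0 N ω : ℕ)
    have hτ : IsStoppingTime 𝒢 τ :=
      hS.stronglyAdapted.adapted.isStoppingTime_hittingBtwn measurableSet_Ici
    have hτN (ω : Ω) : τ ω ≤ N := WithTop.coe_le_coe.2 (hittingBtwn_le ω)
    have hint : Integrable (stoppedValue S τ) P :=
      integrable_stoppedValue ℕ hτ hS.integrable hτN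
    have hstop : ∫ ω, stoppedValue S τ ω ∂P ≤ ∫ ω, S 0 ω ∂P := by
      have := hS.neg.expected_stoppedValue_mono (isStoppingTime_const 𝒢 0) hτ
        (fun ω => WithTop.coe_le_coe.2 (Nat.zero_le _)) hτN
      simpa [stoppedValue, integral_neg] using this
    have hmarkov : a * P.real {ω | a ≤ stoppedValue S τ ω} ≤ ∫ ω, stoppedValue S τ ω ∂P :=
      mul_meas_ge_le_integral_of_nonneg (ae_of_all _ fun ω => hnonneg _ _) hint a
    calc P {ω | ∃ n ≤ N, a ≤ S n ω} ≤ P {ω | a ≤ stoppedValue S τ ω} :=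
          measure_mono fun ω ⟨n, hn, h⟩ =>
            stoppedValue_hittingBtwn_mem ⟨n, ⟨Nat.zero_le _, hn⟩, h⟩
      _ = ENNReal.ofReal (P.real {ω | a ≤ stoppedValue S τ ω}) :=
          (ofReal_measureReal (measure_ne_top _ _)).symm
      _ ≤ _ := ENNReal.ofReal_le_ofReal (by rw [le_div_iff₀' ha]; linarith)
  have hmono : Monotone fun N => {ω | ∃ n ≤ N, a ≤ S n ω} :=
    fun N M hNM ω ⟨n, hn, h⟩ => ⟨n, hn.trans hNM, h⟩
  have hunion : {ω | ∃ n, a ≤ S n ω} = ⋃ N, {ω | ∃ n ≤ N, a ≤ S n ω} := by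
    ext ω
    simp only [Set.mem_ofPred_eq, Set.mem_iUnion]
    exact ⟨fun ⟨n, h⟩ => ⟨n, n, le_rfl, h⟩, fun ⟨_, n, _, h⟩ => ⟨n, h⟩⟩
  rw [hunion, hmono.measure_iUnion]
  exact iSup_le hfin

lemma integrable_exp_mul_of_abs_le_one [IsFiniteMeasure P] {D : Ω → ℝ}
    (hDm : AEStronglyMeasurable D P) (hD : ∀ᵐ ω ∂P, |D ω| ≤ 1) (l : ℝ) :
    Integrable (fun ω => exp (l * D ω)) P :=
  .of_bound (continuous_exp.comp_aestronglyMeasurable (hDm.const_mul l)) (exp |l|) <| by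
    filter_upwards [hD] with ω h
    rw [norm_of_nonneg (exp_pos _).le, exp_le_exp]
    calc l * D ω ≤ |l| * |D ω| := abs_mul l (D ω) ▸ le_abs_self _
      _ ≤ |l| := mul_le_of_le_one_right (abs_nonneg l) h

lemma condExp_exp_mul_le [IsFiniteMeasure P] {m : MeasurableSpace Ω} (hm : m ≤ m0) {D : Ω → ℝ}
    (hDm : AEStronglyMeasurable[m0] D P) (hD : ∀ᵐ ω ∂P, |D ω| ≤ 1) (hD0 : P[D|m] =ᵐ[P] 0)
    {l : ℝ} (hl : 0 ≤ l) :
    P[fun ω => exp (l * D ω)|m]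
      ≤ᵐ[P] fun ω => exp ((exp l - 1 - l) * P[fun ω => D ω ^ 2|m] ω) := by
  set p := exp l - 1 - l
  have hDint : Integrable D P := .of_bound hDm 1 hD
  have hD2int : Integrable (fun ω => D ω ^ 2) P := .of_bound (hDm.pow 2) 1 <| by
    filter_upwards [hD] with ω h
    simpa [abs_le] using h
  have hEint := integrable_exp_mul_of_abs_le_one hDm hD l
  have hlin : P[fun ω => 1 + l * D ω + p * D ω ^ 2|m]
      =ᵐ[P] fun ω => 1 + p * P[fun ω => D ω ^ 2|m] ω := by
    have h1 : P[fun ω => 1 + l * D ω + p * D ω ^ 2|m]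
        =ᵐ[P] P[fun ω => 1 + l * D ω|m] + P[fun ω => p * D ω ^ 2|m] :=
      condExp_add ((integrable_const 1).add (hDint.const_mul l)) (hD2int.const_mul p) m
    have h2 : P[fun ω => 1 + l * D ω|m] =ᵐ[P] P[fun _ => (1 : ℝ)|m] + P[fun ω => l * D ω|m] :=
      condExp_add (integrable_const 1) (hDint.const_mul l) m
    have h3 : P[fun ω => l * D ω|m] =ᵐ[P] fun ω => l * P[D|m] ω := condExp_smul l D m
    have h4 : P[fun ω => p * D ω ^ 2|m] =ᵐ[P] fun ω => p * P[fun ω => D ω ^ 2|m] ω :=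
      condExp_smul p (fun ω => D ω ^ 2) m
    filter_upwards [h1, h2, h3, h4, hD0] with ω h1 h2 h3 h4 h0
    simp only [Pi.add_apply, Pi.zero_apply, condExp_const hm] at h1 h2 h0
    rw [h1, h2, h3, h4, h0, mul_zero, add_zero]
  calc P[fun ω => exp (l * D ω)|m]
      ≤ᵐ[P] P[fun ω => 1 + l * D ω + p * D ω ^ 2|m] :=
        condExp_mono hEint (((integrable_const 1).add (hDint.const_mul l)).add
          (hD2int.const_mul p)) (by filter_upwards [hD] with ω h using exp_mul_le_of_abs_le hl h)
    _ =ᵐ[P] fun ω => 1 + p * P[fun ω => D ω ^ 2|m] ω := hlin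
    _ ≤ᵐ[P] _ := ae_of_all _ fun ω => by linarith [add_one_le_exp (p * P[fun ω => D ω ^ 2|m] ω)]

end

noncomputable def condQuadVar {Ω : Type*} {m0 : MeasurableSpace Ω} (Y : ℕ → Ω → ℝ)
    (ℱ : Filtration ℕ m0) (P : Measure Ω) (n : ℕ) (ω : Ω) : ℝ :=
  ∑ k ∈ Finset.range n, P[fun ω => (Y (k + 1) ω - Y k ω) ^ 2|ℱ k] ω

section condQuadVar

variable {Ω : Type*} {m0 : MeasurableSpace Ω} {P : Measure Ω} {Y : ℕ → Ω → ℝ}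
    {ℱ : Filtration ℕ m0}

lemma condQuadVar_succ (n : ℕ) (ω : Ω) : condQuadVar Y ℱ P (n + 1) ω
    = condQuadVar Y ℱ P n ω + P[fun ω => (Y (n + 1) ω - Y n ω) ^ 2|ℱ n] ω :=
  Finset.sum_range_succ _ _

lemma stronglyMeasurable_condQuadVar {m n : ℕ} (h : n ≤ m + 1) :
    StronglyMeasurable[ℱ m] (condQuadVar Y ℱ P n) :=
  Finset.stronglyMeasurable_fun_sum _ fun k hk =>
    stronglyMeasurable_condExp.mono (ℱ.mono (by simp at hk; omega))

lemma ae_condQuadVar_nonneg : ∀ᵐ ω ∂P, ∀ n, 0 ≤ condQuadVar Y ℱ P n ω := by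
  have h : ∀ᵐ ω ∂P, ∀ k, 0 ≤ P[fun ω => (Y (k + 1) ω - Y k ω) ^ 2|ℱ k] ω :=
    ae_all_iff.2 fun k => condExp_nonneg (ae_of_all _ fun ω => sq_nonneg _)
  filter_upwards [h] with ω h n
  exact Finset.sum_nonneg fun k _ => h k

theorem MeasureTheory.Martingale.supermartingale_exp_mul_sub_condQuadVar [IsFiniteMeasure P]
    (hY : Martingale Y ℱ P) (hY0 : ∀ᵐ ω ∂P, Y 0 ω = 0)
    (hinc : ∀ n, ∀ᵐ ω ∂P, |Y (n + 1) ω - Y n ω| ≤ 1) {l : ℝ} (hl : 0 ≤ l) :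
    Supermartingale
      (fun n ω => exp (l * Y n ω - (exp l - 1 - l) * condQuadVar Y ℱ P n ω)) ℱ P := by
  set p := exp l - 1 - l
  have hp : 0 ≤ p := by linarith [add_one_le_exp l]
  have hsm (n k : ℕ) (hk : k ≤ n + 1) :
      StronglyMeasurable[ℱ n] fun ω => exp (l * Y n ω - p * condQuadVar Y ℱ P k ω) :=
    continuous_exp.comp_stronglyMeasurable (((hY.stronglyAdapted n).const_mul l).sub
      ((stronglyMeasurable_condQuadVar hk).const_mul p))
  have hbdd (n k : ℕ) :
      ∀ᵐ ω ∂P, ‖exp (l * Y n ω - p * condQuadVar Y ℱ P k ω)‖ ≤ exp (l * n) := by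
    filter_upwards [hY0, ae_all_iff.2 hinc, ae_condQuadVar_nonneg] with ω h0 h hW
    rw [norm_of_nonneg (exp_pos _).le, exp_le_exp]
    have := (le_abs_self _).trans (abs_le_of_abs_sub_le_one (y := (Y · ω)) h0 h n)
    nlinarith [mul_nonneg hp (hW k)]
  refine supermartingale_nat (fun n => hsm n n n.le_succ) (fun n => .of_bound
    ((hsm n n n.le_succ).mono (ℱ.le n)).aestronglyMeasurable _ (hbdd n n)) fun n => ?_
  set D := fun ω => Y (n + 1) ω - Y n ω
  set F := fun ω => exp (l * Y n ω - p * condQuadVar Y ℱ P (n + 1) ω)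
  have hDm : AEStronglyMeasurable D P :=
    ((hY.integrable (n + 1)).sub (hY.integrable n)).aestronglyMeasurable
  have hD0 : P[D|ℱ n] =ᵐ[P] 0 := by
    have h : P[D|ℱ n] =ᵐ[P] P[Y (n + 1)|ℱ n] - P[Y n|ℱ n] :=
      condExp_sub (hY.integrable (n + 1)) (hY.integrable n) (ℱ n)
    filter_upwards [h, hY.condExp_ae_eq n.le_succ] with ω h h'
    rw [h, Pi.sub_apply, h', condExp_of_stronglyMeasurable (ℱ.le n) (hY.stronglyAdapted n)
      (hY.integrable n), sub_self, Pi.zero_apply]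
  have hsplit : (fun ω => exp (l * Y (n + 1) ω - p * condQuadVar Y ℱ P (n + 1) ω))
      = F * fun ω => exp (l * D ω) := by
    ext ω
    simp only [F, D, Pi.mul_apply, ← exp_add]
    ring_nf
  calc P[fun ω => exp (l * Y (n + 1) ω - p * condQuadVar Y ℱ P (n + 1) ω)|ℱ n]
      =ᵐ[P] F * P[fun ω => exp (l * D ω)|ℱ n] := by
        rw [hsplit]
        exact condExp_stronglyMeasurable_mul_of_bound (ℱ.le n) (hsm n (n + 1) le_rfl)
          (integrable_exp_mul_of_abs_le_one hDm (hinc n) l) _ (hbdd n (n + 1))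
    _ ≤ᵐ[P] F * fun ω => exp (p * P[fun ω => D ω ^ 2|ℱ n] ω) := by
        filter_upwards [condExp_exp_mul_le (ℱ.le n) hDm (hinc n) hD0 hl] with ω h
        exact mul_le_mul_of_nonneg_left h (exp_pos _).le
    _ = fun ω => exp (l * Y n ω - p * condQuadVar Y ℱ P n ω) := by
        ext ω
        simp only [F, D, Pi.mul_apply, ← exp_add, condQuadVar_succ]
        ring_nf

theorem MeasureTheory.Martingale.measure_exists_le_mul_sub_condQuadVar_le
    [IsProbabilityMeasure P] (hY : Martingale Y ℱ P) (hY0 : ∀ᵐ ω ∂P, Y 0 ω = 0)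
    (hinc : ∀ n, ∀ᵐ ω ∂P, |Y (n + 1) ω - Y n ω| ≤ 1) {l : ℝ} (hl : 0 ≤ l) (b : ℝ) :
    P {ω | ∃ n, b ≤ l * Y n ω - (exp l - 1 - l) * condQuadVar Y ℱ P n ω}
      ≤ ENNReal.ofReal (exp (-b)) := by
  have hS0 : ∫ ω, exp (l * Y 0 ω - (exp l - 1 - l) * condQuadVar Y ℱ P 0 ω) ∂P = 1 := by
    rw [integral_congr_ae (g := fun _ => 1)
      (by filter_upwards [hY0] with ω h; simp [h, condQuadVar])]
    simp
  have h := (hY.supermartingale_exp_mul_sub_condQuadVar hY0 hinc hl).measure_exists_ge_le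
    (fun _ _ => (exp_pos _).le) (exp_pos b)
  simp_rw [exp_le_exp] at h
  rwa [hS0, one_div, ← exp_neg] at h

lemma condQuadVar_ae_eq_sum_Icc (h : ∀ᵐ ω ∂P, Y 1 ω = Y 0 ω) :
    ∀ᵐ ω ∂P, ∀ t, condQuadVar Y ℱ P t ω
      = ∑ τ ∈ Finset.Icc 2 t, P[fun ω' => (Y τ ω' - Y (τ - 1) ω') ^ 2|ℱ (τ - 1)] ω := by
  have h1 : P[fun ω => (Y (0 + 1) ω - Y 0 ω) ^ 2|ℱ 0] =ᵐ[P] 0 := by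
    have h' : (fun ω => (Y (0 + 1) ω - Y 0 ω) ^ 2) =ᵐ[P] 0 := by
      filter_upwards [h] with ω h
      simp [h]
    exact (condExp_congr_ae h').trans (by rw [condExp_zero])
  filter_upwards [h1] with ω h1 t
  induction t with
  | zero => simp [condQuadVar]
  | succ t ih =>
    rw [condQuadVar_succ, ih]
    rcases t with _ | t
    · simpa using h1
    · rw [Finset.sum_Icc_succ_top (by omega : 2 ≤ t + 1 + 1)]
      rfl

end condQuadVar

theorem freedman_quantitative_error_bound_general
    {Ω : Type*} {m0 : MeasurableSpace Ω} {P : Measure Ω} [IsProbabilityMeasure P]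
    (ℱ : Filtration ℕ m0) (Y X W : ℕ → Ω → ℝ) (c : ℝ) (hc : 0 < c)
    (hY : Martingale Y ℱ P)
    (hY1 : ∀ᵐ ω ∂P, Y 1 ω = 0)
    (hbdd : ∀ t : ℕ, 2 ≤ t → ∀ᵐ ω ∂P, |Y t ω - Y (t - 1) ω| ≤ 1)
    (hXincr : ∀ᵐ ω ∂P, ∀ t : ℕ, X t ω ≤ X (t + 1) ω)
    (hW : ∀ t : ℕ, W t
      = fun ω => ∑ τ ∈ Finset.Icc 2 t,
          (P[(fun ω' => (Y τ ω' - Y (τ - 1) ω') ^ 2)|ℱ (τ - 1)]) ω)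
    (hWX : ∀ᵐ ω ∂P, ∀ t : ℕ, W t ω ≤ c * X t ω)
    (g : ℕ → ℝ) (hg : Monotone g)
    (hXg : ∀ t : ℕ, ∀ᵐ ω ∂P, g t ≤ X t ω)
    (t₀ : ℕ) (ht₀ : 2 ≤ g t₀)
    (δ : ℝ) (hδ : δ ∈ Set.Ioo (0 : ℝ) 1)
    (tstar : ℕ) (htstar : t₀ ≤ tstar)
    (hgt : (1 / (1 / (4 * c + 2 / 3))) *
        Real.log (1 / (δ * (Real.exp (1 / (4 * c + 2 / 3)) - 1))) ≤ g tstar) :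
    P {ω | ∃ t : ℕ, tstar ≤ t ∧ X t ω < Y t ω} ≤ ENNReal.ofReal δ := by
  obtain ⟨hδ0, -⟩ := hδ
  set ξ := 1 / (4 * c + 2 / 3) with hξ
  have hξ0 : 0 < ξ := by positivity
  have hK : 2 ≤ g tstar := ht₀.trans (hg htstar)
  have hY0 : ∀ᵐ ω ∂P, Y 0 ω = 0 := hY.ae_eq_zero_of_le zero_le_one hY1
  have hinc (n : ℕ) : ∀ᵐ ω ∂P, |Y (n + 1) ω - Y n ω| ≤ 1 := by
    rcases n with _ | n
    · filter_upwards [hY0, hY1] with ω h0 h1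
      simp [h0, h1]
    · simpa using hbdd (n + 2) (by omega)
  set p := exp (2 * ξ) - 1 - 2 * ξ
  have hp : 0 ≤ p := by linarith [add_one_le_exp (2 * ξ)]
  have hcp : c * p ≤ ξ / 2 :=
    mul_exp_two_mul_sub_one_sub_le hc hξ0 (by rw [hξ, mul_one_div_cancel (by positivity)])
  have herr : {ω | ∃ t, tstar ≤ t ∧ X t ω < Y t ω}
      ≤ᵐ[P] {ω | ∃ n, 3 / 2 * ξ * g tstar ≤ 2 * ξ * Y n ω - p * condQuadVar Y ℱ P n ω} := by
    have hQ := condQuadVar_ae_eq_sum_Icc (Y := Y) (ℱ := ℱ) <| by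
      filter_upwards [hY0, hY1] with ω h0 h1
      rw [h0, h1]
    filter_upwards [hQ, hXincr, hWX, hXg tstar] with ω hQ hXmono hWX hXg ⟨t, ht, hXY⟩
    have hXt : g tstar ≤ X t ω := hXg.trans (monotone_nat_of_le_succ hXmono ht)
    have hQW : condQuadVar Y ℱ P t ω ≤ c * X t ω := by
      rw [hQ t, ← congrFun (hW t) ω]
      exact hWX t
    refine ⟨t, ?_⟩
    linarith [mul_nonneg hξ0.le (sub_nonneg.2 hXY.le), mul_nonneg hp (sub_nonneg.2 hQW),
      mul_nonneg (by linarith : 0 ≤ X t ω) (sub_nonneg.2 hcp), mul_nonneg hξ0.le (sub_nonneg.2 hXt)]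
  calc P {ω | ∃ t, tstar ≤ t ∧ X t ω < Y t ω}
      ≤ ENNReal.ofReal (exp (-(3 / 2 * ξ * g tstar))) :=
        (measure_mono_ae herr).trans
          (hY.measure_exists_le_mul_sub_condQuadVar_le hY0 hinc (by positivity) _)
    _ ≤ ENNReal.ofReal δ := ENNReal.ofReal_le_ofReal (exp_neg_mul_le_of_log_le hξ0 hδ0 hK hgt)

/-- Let `(Y_t)` be a real martingale with `Y_1 = 0` and increments
bounded by `1` a.s., let `(X_t)` be a predictable process with a.s. nonnegative
increments, let `W_t = Σ_{τ=2}^t E[(Y_τ − Y_{τ−1})² | ℱ_{τ−1}]`, and suppose a.s.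
`W_t ≤ c·X_t` for all `t`, for a constant `c > 0`.  Set `ξ = 1/(4c + 2/3)`.  Let
`g : ℕ → ℝ` be nondecreasing with `X_t ≥ g(t)` a.s. for all `t`, and let `t₀` satisfy
`g(t₀) ≥ 2`.  Then for every `δ ∈ (0, 1)` and every `t* ≥ t₀` with
`g(t*) ≥ (1/ξ)·log(1/(δ·(e^ξ − 1)))`, we have `P[∃ t ≥ t* : Y_t > X_t] ≤ δ`. -/
theorem freedman_quantitative_error_bound
    {Ω : Type*} {m0 : MeasurableSpace Ω} {P : Measure Ω} [IsProbabilityMeasure P]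
    (ℱ : Filtration ℕ m0) (Y X W : ℕ → Ω → ℝ) (c : ℝ) (hc : 0 < c)
    (hY : Martingale Y ℱ P)
    (hY1 : ∀ᵐ ω ∂P, Y 1 ω = 0)
    (hbdd : ∀ t : ℕ, 2 ≤ t → ∀ᵐ ω ∂P, |Y t ω - Y (t - 1) ω| ≤ 1)
    (hXmeas : ∀ t : ℕ, 2 ≤ t → Measurable[ℱ (t - 1)] (X t))
    (hXincr : ∀ᵐ ω ∂P, ∀ t : ℕ, X t ω ≤ X (t + 1) ω)
    (hW : ∀ t : ℕ, W t
      = fun ω => ∑ τ ∈ Finset.Icc 2 t,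
          (P[(fun ω' => (Y τ ω' - Y (τ - 1) ω') ^ 2)|ℱ (τ - 1)]) ω)
    (hWX : ∀ᵐ ω ∂P, ∀ t : ℕ, W t ω ≤ c * X t ω)
    (g : ℕ → ℝ) (hg : Monotone g)
    (hXg : ∀ t : ℕ, ∀ᵐ ω ∂P, g t ≤ X t ω)
    (t₀ : ℕ) (ht₀ : 2 ≤ g t₀)
    (δ : ℝ) (hδ : δ ∈ Set.Ioo (0 : ℝ) 1)
    (tstar : ℕ) (htstar : t₀ ≤ tstar)
    (hgt : (1 / (1 / (4 * c + 2 / 3))) *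
        Real.log (1 / (δ * (Real.exp (1 / (4 * c + 2 / 3)) - 1))) ≤ g tstar) :
    P {ω | ∃ t : ℕ, tstar ≤ t ∧ X t ω < Y t ω} ≤ ENNReal.ofReal δ :=
  freedman_quantitative_error_bound_general ℱ Y X W c hc hY hY1 hbdd hXincr hW hWX g hg hXg t₀ ht₀ δ
    hδ tstar htstar hgt
end
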